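/- Let r, s ≥ 3 be integers, both even. If the pair (Γ⁺(r,s), H⁺(r,s)) is basic of cycle type, then (r,s) = (4,4), (4,2p), (2p,4), or (2p,2q) for some odd primes p and q. -/

import Mathlib

open SimpleGraph

namespace OG4

variable {V : Type*} {W : Type*}

/-! ### Normal quotients, cycles, and basic pairs -/

/-- The setoid of orbits of a group `N` of permutations of `V`. -/
def orbitSetoid (N : Subgroup (Equiv.Perm V)) : Setoid V := MulAction.orbitRel N V

/-- The (normal) quotient graph of a graph `Γ` with respect to a group `N` of permutations:
its vertices are the `N`-orbits, two distinct orbits being adjacent iff some vertex of one is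
adjacent in `Γ` to some vertex of the other. -/
def quotientGraph (Γ : SimpleGraph V) (N : Subgroup (Equiv.Perm V)) :
    SimpleGraph (Quotient (orbitSetoid N)) :=
  SimpleGraph.fromRel fun a b =>
    ∃ x y : V, Quotient.mk (orbitSetoid N) x = a ∧ Quotient.mk (orbitSetoid N) y = b ∧ Γ.Adj x y

/-- `N` is a normal subgroup of the subgroup `G` (of some ambient group). -/
def NormalIn {G : Type*} [Group G] (N H : Subgroup G) : Prop :=
  N ≤ H ∧ ∀ h ∈ H, ∀ n ∈ N, h * n * h⁻¹ ∈ N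

/-- A graph is isomorphic to a cycle graph `C_m` for some `m ≥ 3`. -/
def IsoCycle (Δ : SimpleGraph W) : Prop :=
  ∃ m : ℕ, 3 ≤ m ∧ Nonempty (Δ ≃g SimpleGraph.cycleGraph m)

/-- Every normal quotient of `(Γ, G)` relative to a nontrivial normal subgroup is degenerate:
it has at most 2 vertices or is a cycle. -/
def IsBasic (Γ : SimpleGraph V) (G : Subgroup (Equiv.Perm V)) : Prop :=
  ∀ N : Subgroup (Equiv.Perm V), NormalIn N G → N ≠ ⊥ →
    Nat.card (Quotient (orbitSetoid N)) ≤ 2 ∨ IsoCycle (quotientGraph Γ N)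

/-- `(Γ, G)` is basic of cycle type. -/
def BasicOfCycleType (Γ : SimpleGraph V) (G : Subgroup (Equiv.Perm V)) : Prop :=
  IsBasic Γ G ∧
    ∃ N : Subgroup (Equiv.Perm V), NormalIn N G ∧ N ≠ ⊥ ∧ IsoCycle (quotientGraph Γ N)

/-- The kernel of the action of `G` on the set of `N`-orbits. -/
def orbitKernel (G N : Subgroup (Equiv.Perm V)) : Subgroup (Equiv.Perm V) where
  carrier := {g | g ∈ G ∧ ∀ x : V,
    Quotient.mk (orbitSetoid N) (g x) = Quotient.mk (orbitSetoid N) x}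
  one_mem' := ⟨G.one_mem, fun x => by simp⟩
  mul_mem' := by
    rintro a b ⟨haG, ha⟩ ⟨hbG, hb⟩
    refine ⟨G.mul_mem haG hbG, fun x => ?_⟩
    rw [Equiv.Perm.mul_apply, ha (b x), hb x]
  inv_mem' := by
    rintro a ⟨haG, ha⟩
    refine ⟨G.inv_mem haG, fun x => ?_⟩
    have h := ha (a⁻¹ x)
    rw [show a (a⁻¹ x) = x by simp] at h
    exact h.symm

/-- `(Γ, G)` has a pair of independent cyclic normal quotients. -/
def HasIndepCyclicQuotients (Γ : SimpleGraph V) (G : Subgroup (Equiv.Perm V)) : Prop :=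
  ∃ N M : Subgroup (Equiv.Perm V), NormalIn N G ∧ NormalIn M G ∧
    IsoCycle (quotientGraph Γ N) ∧ IsoCycle (quotientGraph Γ M) ∧
    ¬ IsoCycle (quotientGraph Γ (orbitKernel G N ⊓ orbitKernel G M))

/-- `(Γ, G)` is basic of independent-cycle type. -/
def BasicOfIndependentCycleType (Γ : SimpleGraph V) (G : Subgroup (Equiv.Perm V)) : Prop :=
  IsBasic Γ G ∧ HasIndepCyclicQuotients Γ G

/-- Isomorphism of graph-group pairs: a graph isomorphism conjugating one group onto the other. -/
def PairIso (Γ : SimpleGraph V) (G : Subgroup (Equiv.Perm V))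
    (Δ : SimpleGraph W) (H : Subgroup (Equiv.Perm W)) : Prop :=
  ∃ e : Γ ≃g Δ, ∀ h : Equiv.Perm W, h ∈ H ↔ ∃ g ∈ G, e.toEquiv.permCongr g = h

/-! ### Minimal normal subgroups -/

/-- `M` is a minimal normal subgroup of the ambient group. -/
def IsMinimalNormal {G : Type*} [Group G] (M : Subgroup G) : Prop :=
  M.Normal ∧ M ≠ ⊥ ∧ ∀ N : Subgroup G, N.Normal → N ≤ M → N = ⊥ ∨ N = M

/-- `M` is a minimal normal subgroup of the subgroup `H`. -/
def IsMinimalNormalIn {G : Type*} [Group G] (M H : Subgroup G) : Prop :=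
  NormalIn M H ∧ M ≠ ⊥ ∧ ∀ N : Subgroup G, NormalIn N H → N ≤ M → N = ⊥ ∨ N = M

/-! ### The graphs `Γ(r,s)` and their automorphisms -/

/-- In `Γ(r,s)`, the vertex `(i,j)` is joined to the four vertices `(i ± 1, j ± 1)`. -/
def gammaRel (r s : ℕ) (x y : ZMod r × ZMod s) : Prop :=
  (y.1 = x.1 + 1 ∨ y.1 = x.1 - 1) ∧ (y.2 = x.2 + 1 ∨ y.2 = x.2 - 1)

/-- The graph `Γ(r,s)` on `ℤ_r × ℤ_s`. -/
def Gamma (r s : ℕ) : SimpleGraph (ZMod r × ZMod s) := SimpleGraph.fromRel (gammaRel r s)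

/-- `μ : (i,j) ↦ (i+1, j)`. -/
def mu (r s : ℕ) : Equiv.Perm (ZMod r × ZMod s) :=
  (Equiv.addRight (1 : ZMod r)).prodCongr (Equiv.refl (ZMod s))

/-- `ν : (i,j) ↦ (i, j+1)`. -/
def nu (r s : ℕ) : Equiv.Perm (ZMod r × ZMod s) :=
  (Equiv.refl (ZMod r)).prodCongr (Equiv.addRight (1 : ZMod s))

/-- `σ : (i,j) ↦ (-i, j)`. -/
def sigma (r s : ℕ) : Equiv.Perm (ZMod r × ZMod s) :=
  (Equiv.neg (ZMod r)).prodCongr (Equiv.refl (ZMod s))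

/-- `τ : (i,j) ↦ (-i, -j)`. -/
def tau (r s : ℕ) : Equiv.Perm (ZMod r × ZMod s) :=
  (Equiv.neg (ZMod r)).prodCongr (Equiv.neg (ZMod s))

/-- `σν : (i,j) ↦ (-i, j+1)`. -/
def sigmaNu (r s : ℕ) : Equiv.Perm (ZMod r × ZMod s) :=
  (Equiv.neg (ZMod r)).prodCongr (Equiv.addRight (1 : ZMod s))

/-- `μν : (i,j) ↦ (i+1, j+1)`. -/
def muNu (r s : ℕ) : Equiv.Perm (ZMod r × ZMod s) :=
  (Equiv.addRight (1 : ZMod r)).prodCongr (Equiv.addRight (1 : ZMod s))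

/-- `σμν : (i,j) ↦ (-(i+1), j+1)`. -/
def sigmaMuNu (r s : ℕ) : Equiv.Perm (ZMod r × ZMod s) :=
  ((Equiv.addRight (1 : ZMod r)).trans (Equiv.neg (ZMod r))).prodCongr
    (Equiv.addRight (1 : ZMod s))

/-- `μ² : (i,j) ↦ (i+2, j)`. -/
def muSq (r s : ℕ) : Equiv.Perm (ZMod r × ZMod s) :=
  (Equiv.addRight (2 : ZMod r)).prodCongr (Equiv.refl (ZMod s))

/-- `ν² : (i,j) ↦ (i, j+2)`. -/
def nuSq (r s : ℕ) : Equiv.Perm (ZMod r × ZMod s) :=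
  (Equiv.refl (ZMod r)).prodCongr (Equiv.addRight (2 : ZMod s))

/-- `μ^k : (i,j) ↦ (i+k, j)`. -/
def muPow (r s k : ℕ) : Equiv.Perm (ZMod r × ZMod s) :=
  (Equiv.addRight ((k : ZMod r))).prodCongr (Equiv.refl (ZMod s))

/-- `μ^k ν² : (i,j) ↦ (i+k, j+2)`. -/
def muPowNuSq (r s k : ℕ) : Equiv.Perm (ZMod r × ZMod s) :=
  (Equiv.addRight ((k : ZMod r))).prodCongr (Equiv.addRight (2 : ZMod s))

/-- `G(r,s) = ⟨μ, ν, σ⟩`. -/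
def Ggroup (r s : ℕ) : Subgroup (Equiv.Perm (ZMod r × ZMod s)) :=
  Subgroup.closure {mu r s, nu r s, sigma r s}

/-- `H(r,s) = ⟨μ, σν, τ⟩`. -/
def Hgroup (r s : ℕ) : Subgroup (Equiv.Perm (ZMod r × ZMod s)) :=
  Subgroup.closure {mu r s, sigmaNu r s, tau r s}

/-! ### The graphs `Γ⁺(r,s)` (for `r`, `s` even) -/

/-- `X⁺`: the set of `(i,j)` with `i` and `j` of the same parity. -/
def XPlus (r s : ℕ) : Set (ZMod r × ZMod s) := {x | x.1.val % 2 = x.2.val % 2}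

/-- `Γ⁺(r,s)`, the subgraph of `Γ(r,s)` induced on `X⁺`. -/
def GammaPlus (r s : ℕ) : SimpleGraph (XPlus r s) :=
  SimpleGraph.induce (XPlus r s) (Gamma r s)

section parity

lemma val_add_one_mod_two (r : ℕ) (hr : 2 ∣ r) (hr0 : r ≠ 0) (i : ZMod r) :
    (i + 1).val % 2 = (i.val + 1) % 2 := by
  haveI : NeZero r := ⟨hr0⟩
  haveI : Fact (1 < r) := ⟨by have := Nat.le_of_dvd (Nat.pos_of_ne_zero hr0) hr; omega⟩
  rw [ZMod.val_add, Nat.mod_mod_of_dvd _ hr, ZMod.val_one]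

lemma val_add_two_mod_two (r : ℕ) (hr : 2 ∣ r) (hr0 : r ≠ 0) (i : ZMod r) :
    (i + 2).val % 2 = i.val % 2 := by
  have h1 := val_add_one_mod_two r hr hr0 i
  have h2 := val_add_one_mod_two r hr hr0 (i + 1)
  rw [show i + 1 + 1 = i + 2 by ring] at h2
  omega

lemma val_neg_mod_two (r : ℕ) (hr : 2 ∣ r) (hr0 : r ≠ 0) (i : ZMod r) :
    (-i).val % 2 = i.val % 2 := by
  haveI : NeZero r := ⟨hr0⟩
  rcases eq_or_ne i 0 with h | h
  · simp [h]
  · have h1 : (-i).val = r - i.val := by rw [ZMod.neg_val]; simp [h]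
    have h2 : i.val < r := ZMod.val_lt i
    have h3 : i.val ≠ 0 := fun hh => h ((ZMod.val_eq_zero i).mp hh)
    obtain ⟨t, rfl⟩ := hr
    rw [h1]
    omega

end parity

section plusPerms

variable (r s : ℕ)

/-- The restriction of `μ²` to `X⁺`. -/
def muSqP (hr : 2 ∣ r) (hr0 : r ≠ 0) : Equiv.Perm (XPlus r s) :=
  (muSq r s).subtypePerm (by
    intro x
    have h := val_add_two_mod_two r hr hr0 x.1
    simp only [XPlus, Set.mem_setOf_eq, muSq, Equiv.prodCongr_apply, Prod.map,
      Equiv.coe_addRight, Equiv.refl_apply]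
    omega)

/-- The restriction of `ν²` to `X⁺`. -/
def nuSqP (hs : 2 ∣ s) (hs0 : s ≠ 0) : Equiv.Perm (XPlus r s) :=
  (nuSq r s).subtypePerm (by
    intro x
    have h := val_add_two_mod_two s hs hs0 x.2
    simp only [XPlus, Set.mem_setOf_eq, nuSq, Equiv.prodCongr_apply, Prod.map,
      Equiv.coe_addRight, Equiv.refl_apply]
    omega)

/-- The restriction of `μν` to `X⁺`. -/
def muNuP (hr : 2 ∣ r) (hr0 : r ≠ 0) (hs : 2 ∣ s) (hs0 : s ≠ 0) : Equiv.Perm (XPlus r s) :=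
  (muNu r s).subtypePerm (by
    intro x
    have h1 := val_add_one_mod_two r hr hr0 x.1
    have h2 := val_add_one_mod_two s hs hs0 x.2
    simp only [XPlus, Set.mem_setOf_eq, muNu, Equiv.prodCongr_apply, Prod.map,
      Equiv.coe_addRight]
    omega)

/-- The restriction of `σ` to `X⁺`. -/
def sigmaP (hr : 2 ∣ r) (hr0 : r ≠ 0) : Equiv.Perm (XPlus r s) :=
  (sigma r s).subtypePerm (by
    intro x
    have h := val_neg_mod_two r hr hr0 x.1
    simp only [XPlus, Set.mem_setOf_eq, sigma, Equiv.prodCongr_apply, Prod.map,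
      Equiv.neg_apply, Equiv.refl_apply]
    omega)

/-- The restriction of `τ` to `X⁺`. -/
def tauP (hr : 2 ∣ r) (hr0 : r ≠ 0) (hs : 2 ∣ s) (hs0 : s ≠ 0) : Equiv.Perm (XPlus r s) :=
  (tau r s).subtypePerm (by
    intro x
    have h1 := val_neg_mod_two r hr hr0 x.1
    have h2 := val_neg_mod_two s hs hs0 x.2
    simp only [XPlus, Set.mem_setOf_eq, tau, Equiv.prodCongr_apply, Prod.map,
      Equiv.neg_apply]
    omega)

/-- The restriction of `σμν` to `X⁺`. -/
def sigmaMuNuP (hr : 2 ∣ r) (hr0 : r ≠ 0) (hs : 2 ∣ s) (hs0 : s ≠ 0) :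
    Equiv.Perm (XPlus r s) :=
  (sigmaMuNu r s).subtypePerm (by
    intro x
    have h1 := val_neg_mod_two r hr hr0 (x.1 + 1)
    have h2 := val_add_one_mod_two r hr hr0 x.1
    have h3 := val_add_one_mod_two s hs hs0 x.2
    simp only [XPlus, Set.mem_setOf_eq, sigmaMuNu, Equiv.prodCongr_apply, Prod.map,
      Equiv.trans_apply, Equiv.coe_addRight, Equiv.neg_apply]
    omega)

/-- `G⁺(r,s) = ⟨μ², μν, σ⟩` acting on `X⁺`. -/
def GPlusGroup (hr : 2 ∣ r) (hr0 : r ≠ 0) (hs : 2 ∣ s) (hs0 : s ≠ 0) :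
    Subgroup (Equiv.Perm (XPlus r s)) :=
  Subgroup.closure {muSqP r s hr hr0, muNuP r s hr hr0 hs hs0, sigmaP r s hr hr0}

/-- `H⁺(r,s) = ⟨μ², σμν, τ⟩` acting on `X⁺`. -/
def HPlusGroup (hr : 2 ∣ r) (hr0 : r ≠ 0) (hs : 2 ∣ s) (hs0 : s ≠ 0) :
    Subgroup (Equiv.Perm (XPlus r s)) :=
  Subgroup.closure
    {muSqP r s hr hr0, sigmaMuNuP r s hr hr0 hs hs0, tauP r s hr hr0 hs hs0}

end plusPerms

/-! ### The standard double cover `Γ₂(r,s)` -/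

/-- Adjacency of the double cover: `(i,j)_δ ~ (i ± 1, j ± 1)_{δ+1}`. -/
def gamma2Rel (r s : ℕ) (x y : (ZMod r × ZMod s) × ZMod 2) : Prop :=
  (y.1.1 = x.1.1 + 1 ∨ y.1.1 = x.1.1 - 1) ∧ (y.1.2 = x.1.2 + 1 ∨ y.1.2 = x.1.2 - 1) ∧
    y.2 = x.2 + 1

/-- `Γ₂(r,s)`, the standard double cover of `Γ(r,s)`. -/
def Gamma2 (r s : ℕ) : SimpleGraph ((ZMod r × ZMod s) × ZMod 2) :=
  SimpleGraph.fromRel (gamma2Rel r s)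

/-- `μ : (i,j)_δ ↦ (i+1, j)_δ` on the double cover. -/
def muD (r s : ℕ) : Equiv.Perm ((ZMod r × ZMod s) × ZMod 2) :=
  (mu r s).prodCongr (Equiv.refl (ZMod 2))

/-- `ν : (i,j)_δ ↦ (i, j+1)_δ` on the double cover. -/
def nuD (r s : ℕ) : Equiv.Perm ((ZMod r × ZMod s) × ZMod 2) :=
  (nu r s).prodCongr (Equiv.refl (ZMod 2))

/-- `σ : (i,j)_δ ↦ (i, -j)_{δ+1}` on the double cover. -/
def sigmaD (r s : ℕ) : Equiv.Perm ((ZMod r × ZMod s) × ZMod 2) :=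
  ((Equiv.refl (ZMod r)).prodCongr (Equiv.neg (ZMod s))).prodCongr
    (Equiv.addRight (1 : ZMod 2))

/-- `τ : (i,j)_δ ↦ (-i, -j)_δ` on the double cover. -/
def tauD (r s : ℕ) : Equiv.Perm ((ZMod r × ZMod s) × ZMod 2) :=
  (tau r s).prodCongr (Equiv.refl (ZMod 2))

/-- `G₂(r,s) = ⟨μ, ν, σ, τ⟩` on the double cover. -/
def G2group (r s : ℕ) : Subgroup (Equiv.Perm ((ZMod r × ZMod s) × ZMod 2)) :=
  Subgroup.closure {muD r s, nuD r s, sigmaD r s, tauD r s}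



/-!
Write `r = 2p`. If `p` has a proper divisor `d ≥ 2`, the translation `μ^{2d}` generates a
nontrivial normal subgroup `N` of `H⁺(r,s)`: `μ²` commutes with it and `σμν`, `τ` invert it.
The `N`-orbits are read off from `(i mod 2d, j)`, so the vertex `(0,0)` of `Γ⁺_N` has the three
distinct neighbours coming from `(1,1)`, `(-1,1)`, `(1,-1)`: `Γ⁺_N` is neither a cycle nor a
graph on at most two vertices, and the pair is not basic. The same works for `s = 2q` with
`(σμν)^{2d}`, the translation by `(0, 2d)`. Hence `p` and `q` are prime.
-/
theorem IsoCycle.eq_or_eq_or_eq_of_adj {Δ : SimpleGraph V} (h : IsoCycle Δ) {v a b c : V}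
    (ha : Δ.Adj v a) (hb : Δ.Adj v b) (hc : Δ.Adj v c) : a = b ∨ a = c ∨ b = c := by
  obtain ⟨m, hm, ⟨e⟩⟩ := h
  obtain ⟨n, rfl⟩ : ∃ n, m = n + 2 := ⟨m - 2, by omega⟩
  have hnbr : ∀ {w}, Δ.Adj v w → e w = e v - 1 ∨ e w = e v + 1 := by
    intro w hw
    have : e w ∈ (cycleGraph (n + 2)).neighborSet (e v) := e.map_adj_iff.mpr hw
    simpa [cycleGraph_neighborSet] using this
  simp only [← e.injective.eq_iff]
  rcases hnbr ha with h1 | h1 <;> rcases hnbr hb with h2 | h2 <;> rcases hnbr hc with h3 | h3 <;>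
    simp [h1, h2, h3]

def invariantPerms {β : Type*} (f : V → β) : Subgroup (Equiv.Perm V) where
  carrier := {g | f ∘ g = f}
  one_mem' := rfl
  mul_mem' {a b} (ha : f ∘ a = f) (hb : f ∘ b = f) := by
    show f ∘ (a ∘ b) = f
    rw [← Function.comp_assoc, ha, hb]
  inv_mem' {a} (ha : f ∘ a = f) := by
    calc f ∘ ⇑a⁻¹ = (f ∘ a) ∘ ⇑a⁻¹ := by rw [ha]
      _ = f := by ext; simp

theorem apply_eq_of_mk_eq {β : Type*} {N : Subgroup (Equiv.Perm V)} {f : V → β}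
    (hN : N ≤ invariantPerms f) {x y : V}
    (h : Quotient.mk (orbitSetoid N) x = Quotient.mk (orbitSetoid N) y) : f x = f y := by
  obtain ⟨⟨n, hn⟩, rfl⟩ := Quotient.exact h
  exact congrFun (hN hn) y

theorem quotientGraph_adj_mk {Γ : SimpleGraph V} {N : Subgroup (Equiv.Perm V)} {x y : V}
    (hxy : Γ.Adj x y) (hne : Quotient.mk (orbitSetoid N) x ≠ Quotient.mk (orbitSetoid N) y) :
    (quotientGraph Γ N).Adj (Quotient.mk _ x) (Quotient.mk _ y) := by
  rw [quotientGraph, fromRel_adj]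
  exact ⟨hne, .inl ⟨x, y, rfl, rfl, hxy⟩⟩

theorem not_isBasic_of_invariant [Finite V] {β : Type*} {Γ : SimpleGraph V}
    {G N : Subgroup (Equiv.Perm V)} (hNG : NormalIn N G) (hN : N ≠ ⊥) {f : V → β}
    (hf : N ≤ invariantPerms f) {v a b c : V} (ha : Γ.Adj v a) (hb : Γ.Adj v b)
    (hc : Γ.Adj v c) (hnodup : [f v, f a, f b, f c].Nodup) : ¬ IsBasic Γ G := by
  intro hbasic
  have hq : ∀ {x y}, f x ≠ f y →
      Quotient.mk (orbitSetoid N) x ≠ Quotient.mk (orbitSetoid N) y :=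
    fun hxy h => hxy (apply_eq_of_mk_eq hf h)
  simp only [List.nodup_cons, List.mem_cons, List.not_mem_nil, List.nodup_nil, not_or,
    or_false, not_false_eq_true, and_true] at hnodup
  obtain ⟨⟨hva, hvb, hvc⟩, ⟨hab, hac⟩, hbc⟩ := hnodup
  rcases hbasic N hNG hN with hcard | hcyc
  · classical
    have : Fintype (Quotient (orbitSetoid N)) := Fintype.ofFinite _
    let S : Finset (Quotient (orbitSetoid N)) :=
      {Quotient.mk _ v, Quotient.mk _ a, Quotient.mk _ b}
    have h3 : S.card = 3 := Finset.card_eq_three.mpr ⟨_, _, _, hq hva, hq hvb, hq hab, rfl⟩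
    have := Finset.card_le_univ S
    rw [Nat.card_eq_fintype_card] at hcard
    omega
  · rcases hcyc.eq_or_eq_or_eq_of_adj (quotientGraph_adj_mk ha (hq hva))
      (quotientGraph_adj_mk hb (hq hvb)) (quotientGraph_adj_mk hc (hq hvc)) with h | h | h
    exacts [hq hab h, hq hac h, hq hbc h]

theorem NormalIn.of_le_normalizer {G : Type*} [Group G] {N H : Subgroup G} (hNH : N ≤ H)
    (hH : H ≤ Subgroup.normalizer (N : Set G)) : NormalIn N H :=
  ⟨hNH, fun _ hh n hn => (Subgroup.mem_normalizer_iff.mp (hH hh) n).mp hn⟩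

/-- `g * t * g = t` says that conjugation by `t` inverts `g`. -/
theorem mem_normalizer_zpowers {G : Type*} [Group G] {g t : G}
    (h : t * g = g * t ∨ g * t * g = t) :
    t ∈ Subgroup.normalizer (Subgroup.zpowers g : Set G) := by
  rw [Subgroup.mem_normalizer_iff_map_conj_eq, MonoidHom.map_zpowers]
  rcases h with h | h
  · simp [MulAut.conj_apply, h]
  · have : t * g * t⁻¹ = g⁻¹ := calc
      t * g * t⁻¹ = g⁻¹ * (g * t * g) * t⁻¹ := by group
      _ = g⁻¹ := by rw [h]; group
    simp [MulAut.conj_apply, this, Subgroup.zpowers_inv]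

theorem normalIn_zpowers_closure {G : Type*} [Group G] {S : Set G} {g : G}
    (hg : g ∈ Subgroup.closure S) (hS : ∀ t ∈ S, t * g = g * t ∨ g * t * g = t) :
    NormalIn (Subgroup.zpowers g) (Subgroup.closure S) :=
  .of_le_normalizer (Subgroup.zpowers_le.mpr hg)
    ((Subgroup.closure_le _).mpr fun t ht => mem_normalizer_zpowers (hS t ht))

theorem coe_pow_apply_eq_add_nsmul {α : Type*} [AddCommMonoid α] {S : Set α}
    {g : Equiv.Perm S} {t : α} (hg : ∀ x, (g x : α) = x + t) (d : ℕ) (x : S) :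
    ((g ^ d) x : α) = x + d • t := by
  induction d generalizing x with
  | zero => simp
  | succ d ih => rw [pow_succ, Equiv.Perm.mul_apply, ih, hg, succ_nsmul', add_assoc]

section GammaPlus

variable {r s : ℕ} (hre : 2 ∣ r) (hr0 : r ≠ 0) (hse : 2 ∣ s) (hs0 : s ≠ 0)

theorem coe_muSqP_apply (x : XPlus r s) :
    (muSqP r s hre hr0 x : ZMod r × ZMod s) = (x : ZMod r × ZMod s) + (2, 0) :=
  Prod.ext rfl (add_zero _).symm

theorem coe_sigmaMuNuP_apply (x : XPlus r s) :
    (sigmaMuNuP r s hre hr0 hse hs0 x : ZMod r × ZMod s) = (-(x.1.1 + 1), x.1.2 + 1) := rfl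

theorem coe_tauP_apply (x : XPlus r s) :
    (tauP r s hre hr0 hse hs0 x : ZMod r × ZMod s) = -x := rfl

theorem coe_sigmaMuNuP_sq_apply (x : XPlus r s) :
    ((sigmaMuNuP r s hre hr0 hse hs0 ^ 2) x : ZMod r × ZMod s) =
      (x : ZMod r × ZMod s) + (0, 2) := by
  rw [sq, Equiv.Perm.mul_apply, coe_sigmaMuNuP_apply, coe_sigmaMuNuP_apply]
  ext <;> simp only [Prod.fst_add, Prod.snd_add] <;> ring

theorem normalIn_zpowers_of_translation {g : Equiv.Perm (XPlus r s)}
    (hg : g ∈ HPlusGroup r s hre hr0 hse hs0) {t : ZMod r × ZMod s}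
    (hgt : ∀ x, (g x : ZMod r × ZMod s) = x + t) (ht : t.1 = 0 ∨ t.2 = 0) :
    NormalIn (Subgroup.zpowers g) (HPlusGroup r s hre hr0 hse hs0) := by
  refine normalIn_zpowers_closure hg fun u hu => ?_
  simp only [Set.mem_insert_iff, Set.mem_singleton_iff] at hu
  rcases hu with rfl | rfl | rfl
  · refine .inl (Equiv.ext fun x => Subtype.ext ?_)
    simp only [Equiv.Perm.mul_apply, coe_muSqP_apply, hgt]
    abel
  · rcases ht with ht | ht
    · refine .inl (Equiv.ext fun x => Subtype.ext ?_)
      simp only [Equiv.Perm.mul_apply, coe_sigmaMuNuP_apply, hgt]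
      ext <;> simp only [Prod.fst_add, Prod.snd_add, ht] <;> ring
    · refine .inr (Equiv.ext fun x => Subtype.ext ?_)
      simp only [Equiv.Perm.mul_apply, coe_sigmaMuNuP_apply, hgt]
      ext <;> simp only [Prod.fst_add, Prod.snd_add, ht] <;> ring
  · refine .inr (Equiv.ext fun x => Subtype.ext ?_)
    simp only [Equiv.Perm.mul_apply, coe_tauP_apply, hgt]
    abel

theorem gammaPlus_adj_of_gammaRel {x y : XPlus r s} (hxy : x.1.1 ≠ y.1.1)
    (h : gammaRel r s x y) : (GammaPlus r s).Adj x y :=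
  (fromRel_adj _ _ _).mpr ⟨fun e => hxy (congrArg Prod.fst e), .inl h⟩

theorem not_isBasic_of_translation {g : Equiv.Perm (XPlus r s)}
    (hg : g ∈ HPlusGroup r s hre hr0 hse hs0) {t : ZMod r × ZMod s}
    (hgt : ∀ x, (g x : ZMod r × ZMod s) = x + t) (ht0 : t ≠ 0) (ht : t.1 = 0 ∨ t.2 = 0)
    {A B : Type*} [Ring A] [Ring B] (φ : ZMod r →+* A) (ψ : ZMod s →+* B)
    (hφ : φ t.1 = 0) (hψ : ψ t.2 = 0) (hA : (1 : A) ≠ -1) (hB : (1 : B) ≠ -1) :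
    ¬ IsBasic (GammaPlus r s) (HPlusGroup r s hre hr0 hse hs0) := by
  have : Fact (1 < r) := ⟨by obtain ⟨k, rfl⟩ := hre; omega⟩
  have : Fact (1 < s) := ⟨by obtain ⟨k, rfl⟩ := hse; omega⟩
  have hr_neg := val_neg_mod_two r hre hr0 1
  have hs_neg := val_neg_mod_two s hse hs0 1
  have h10 : (1 : ZMod r) ≠ 0 := one_ne_zero
  let v : XPlus r s := ⟨(0, 0), by simp [XPlus]⟩
  let a : XPlus r s := ⟨(1, 1), by simp [XPlus, ZMod.val_one]⟩
  let b : XPlus r s := ⟨(-1, 1), by simp [XPlus, ZMod.val_one, hr_neg]⟩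
  let c : XPlus r s := ⟨(1, -1), by simp [XPlus, ZMod.val_one, hs_neg]⟩
  have hA0 : (1 : A) ≠ 0 := fun h => hA (by rw [h, neg_zero])
  have hB0 : (1 : B) ≠ 0 := fun h => hB (by rw [h, neg_zero])
  refine not_isBasic_of_invariant (f := fun x => (φ x.1.1, ψ x.1.2)) (v := v) (a := a)
    (b := b) (c := c) (normalIn_zpowers_of_translation hre hr0 hse hs0 hg hgt ht) ?_ ?_
    (gammaPlus_adj_of_gammaRel h10.symm (by simp [gammaRel, v, a]))
    (gammaPlus_adj_of_gammaRel (by simp [v, b, h10]) (by simp [gammaRel, v, b]))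
    (gammaPlus_adj_of_gammaRel h10.symm (by simp [gammaRel, v, c])) ?_
  · rw [Ne, Subgroup.zpowers_eq_bot]
    rintro rfl
    exact ht0 (by simpa using (hgt v).symm)
  · refine Subgroup.zpowers_le.mpr (funext fun x => ?_)
    simp [hgt, hφ, hψ]
  · simp [v, a, b, c, hA, hB, hA0, hB0, hA.symm, hA0.symm, hB0.symm]

theorem not_isBasic_of_dvd_left {d : ℕ} (hd : 2 ≤ d) (hdr : 2 * d ∣ r) (hdr' : 2 * d < r)
    (hs : 3 ≤ s) : ¬ IsBasic (GammaPlus r s) (HPlusGroup r s hre hr0 hse hs0) := by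
  have : Fact (2 < 2 * d) := ⟨by omega⟩
  have : Fact (2 < s) := ⟨hs⟩
  have ht : ((2 * d : ℕ) : ZMod r) ≠ 0 := by
    rw [Ne, ZMod.natCast_eq_zero_iff]
    exact fun h => absurd (Nat.le_of_dvd (by omega) h) (by omega)
  refine not_isBasic_of_translation hre hr0 hse hs0
    (pow_mem (Subgroup.subset_closure (by simp)) d)
    (coe_pow_apply_eq_add_nsmul (coe_muSqP_apply hre hr0) d) ?_ (.inr (by simp))
    (ZMod.castHom hdr (ZMod (2 * d))) (RingHom.id _) ?_ (by simp)
    ZMod.neg_one_ne_one.symm ZMod.neg_one_ne_one.symm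
  · refine fun h => ht ?_
    simpa [mul_comm] using congrArg Prod.fst h
  · rw [Prod.smul_fst, nsmul_eq_mul, map_mul, map_natCast, map_ofNat]
    simpa [mul_comm] using ZMod.natCast_self (2 * d)

theorem not_isBasic_of_dvd_right {d : ℕ} (hd : 2 ≤ d) (hds : 2 * d ∣ s) (hds' : 2 * d < s)
    (hr : 3 ≤ r) : ¬ IsBasic (GammaPlus r s) (HPlusGroup r s hre hr0 hse hs0) := by
  have : Fact (2 < 2 * d) := ⟨by omega⟩
  have : Fact (2 < r) := ⟨hr⟩
  have ht : ((2 * d : ℕ) : ZMod s) ≠ 0 := by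
    rw [Ne, ZMod.natCast_eq_zero_iff]
    exact fun h => absurd (Nat.le_of_dvd (by omega) h) (by omega)
  refine not_isBasic_of_translation hre hr0 hse hs0
    (pow_mem (pow_mem (Subgroup.subset_closure (by simp)) 2) d)
    (coe_pow_apply_eq_add_nsmul (coe_sigmaMuNuP_sq_apply hre hr0 hse hs0) d) ?_
    (.inl (by simp)) (RingHom.id _) (ZMod.castHom hds (ZMod (2 * d))) (by simp) ?_
    ZMod.neg_one_ne_one.symm ZMod.neg_one_ne_one.symm
  · refine fun h => ht ?_
    simpa [mul_comm] using congrArg Prod.snd h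
  · rw [Prod.smul_snd, nsmul_eq_mul, map_mul, map_natCast, map_ofNat]
    simpa [mul_comm] using ZMod.natCast_self (2 * d)

theorem prime_of_isBasic_left {p : ℕ} (hrp : r = 2 * p) (hr : 3 ≤ r) (hs : 3 ≤ s)
    (h : IsBasic (GammaPlus r s) (HPlusGroup r s hre hr0 hse hs0)) : p.Prime := by
  by_contra hp
  obtain ⟨d, hdp, hd, hdp'⟩ := Nat.exists_dvd_of_not_prime2 (by omega) hp
  exact not_isBasic_of_dvd_left hre hr0 hse hs0 hd (hrp ▸ Nat.mul_dvd_mul_left 2 hdp)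
    (by omega) hs h

theorem prime_of_isBasic_right {q : ℕ} (hsq : s = 2 * q) (hr : 3 ≤ r) (hs : 3 ≤ s)
    (h : IsBasic (GammaPlus r s) (HPlusGroup r s hre hr0 hse hs0)) : q.Prime := by
  by_contra hq
  obtain ⟨d, hdq, hd, hdq'⟩ := Nat.exists_dvd_of_not_prime2 (by omega) hq
  exact not_isBasic_of_dvd_right hre hr0 hse hs0 hd (hsq ▸ Nat.mul_dvd_mul_left 2 hdq)
    (by omega) hr h

end GammaPlus

/-- if `(Γ⁺(r,s), H⁺(r,s))` (with `r,s ≥ 3` both even) is basic of cycle type,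
then `(r,s)` is `(4,4)`, `(4,2p)`, `(2p,4)` or `(2p,2q)` for odd primes `p`, `q`. -/
theorem stmt3 (r s : ℕ) (hr : 3 ≤ r) (hs : 3 ≤ s) (hre : 2 ∣ r) (hse : 2 ∣ s)
    (hbasic : BasicOfCycleType (GammaPlus r s)
      (HPlusGroup r s hre (by omega) hse (by omega))) :
    (r = 4 ∧ s = 4) ∨ (∃ p : ℕ, p.Prime ∧ Odd p ∧ r = 4 ∧ s = 2 * p) ∨
      (∃ p : ℕ, p.Prime ∧ Odd p ∧ r = 2 * p ∧ s = 4) ∨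
      (∃ p q : ℕ, p.Prime ∧ Odd p ∧ q.Prime ∧ Odd q ∧ r = 2 * p ∧ s = 2 * q) := by
  obtain ⟨p, hrp⟩ := id hre
  obtain ⟨q, hsq⟩ := id hse
  have hp := prime_of_isBasic_left hre _ hse _ hrp hr hs hbasic.1
  have hq := prime_of_isBasic_right hre _ hse _ hsq hr hs hbasic.1
  rcases hp.eq_two_or_odd' with rfl | hpo <;> rcases hq.eq_two_or_odd' with rfl | hqo
  · exact .inl ⟨hrp, hsq⟩
  · exact .inr (.inl ⟨q, hq, hqo, hrp, hsq⟩)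
  · exact .inr (.inr (.inl ⟨p, hp, hpo, hrp, hsq⟩))
  · exact .inr (.inr (.inr ⟨p, q, hp, hpo, hq, hqo, hrp, hsq⟩))

end OG4
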